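/- Let f : [a,b] → ℝ with f^{(n−1)} absolutely continuous and f^{(n)} ∈ L^∞[a,b]. Then for every x ∈ [a,b], |∫_a^b f(t) dt − Σ_{k=0}^{n−1} (1/(k+1)!)[(x−a)^{k+1} f^{(k)}(a) + (−1)^k (b−x)^{k+1} f^{(k)}(b)]| ≤ (1/(n+1)!)‖f^{(n)}‖_∞[(x−a)^{n+1} + (b−x)^{n+1}]. -/

import Mathlib

open MeasureTheory Set intervalIntegral

lemma key_identity (a b x : ℝ) (hab : a ≤ b) (N : ℕ) (fd : ℕ → ℝ → ℝ)
    (hderiv : ∀ k < N, ∀ y ∈ Icc a b, HasDerivAt (fd k) (fd (k + 1) y) y)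
    (hint : IntervalIntegrable (fd N) volume a b) :
    ∀ n ≤ N, (∫ t in a..b, fd 0 t) =
      (∑ k ∈ Finset.range n,
        (1 / (Nat.factorial (k + 1) : ℝ)) *
          ((x - a) ^ (k + 1) * fd k a + (-1 : ℝ) ^ k * (b - x) ^ (k + 1) * fd k b)) +
      (1 / (Nat.factorial n : ℝ)) * ∫ t in a..b, (x - t) ^ n * fd n t := by
  have hcont : ∀ k < N, ContinuousOn (fd k) (Icc a b) := fun k hk y hy =>
    (hderiv k hk y hy).continuousAt.continuousWithinAt
  have hinteg : ∀ k ≤ N, IntervalIntegrable (fd k) volume a b := by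
    intro k hk
    rcases eq_or_lt_of_le hk with rfl | hk'
    · exact hint
    · exact ((hcont k hk').mono (by rw [uIcc_of_le hab])).intervalIntegrable
  intro n hn
  induction n with
  | zero => simp
  | succ n ih =>
    have hnN : n < N := hn
    have ihn := ih (le_of_lt hnN)
    -- integration by parts
    have hu : ∀ t ∈ Set.uIcc a b, HasDerivAt (fun t => -((x - t) ^ (n + 1)) / (n + 1 : ℝ))
        ((x - t) ^ n) t := by
      intro t _
      have h1 : HasDerivAt (fun t : ℝ => x - t) (-1) t := by
        simpa using (hasDerivAt_id t).const_sub x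
      have h2 := (h1.pow (n + 1))
      have h3 := (h2.neg.div_const ((n : ℝ) + 1))
      refine h3.congr_deriv ?_
      push_cast
      field_simp
    have hv : ∀ t ∈ Set.uIcc a b, HasDerivAt (fd n) (fd (n + 1) t) t := by
      intro t ht
      exact hderiv n hnN t (by rwa [uIcc_of_le hab] at ht)
    have hu' : IntervalIntegrable (fun t => (x - t) ^ n) volume a b :=
      (Continuous.intervalIntegrable (by continuity) a b)
    have hv' : IntervalIntegrable (fd (n + 1)) volume a b := hinteg (n + 1) hn
    have hibp := intervalIntegral.integral_mul_deriv_eq_deriv_mul hu hv hu' hv'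
    have hrw : (∫ t in a..b, -((x - t) ^ (n + 1)) / (n + 1 : ℝ) * fd (n + 1) t)
        = (-(1 / ((n : ℝ) + 1))) * ∫ t in a..b, (x - t) ^ (n + 1) * fd (n + 1) t := by
      rw [← intervalIntegral.integral_const_mul]
      congr 1; funext t; ring
    have hmain : (∫ t in a..b, (x - t) ^ n * fd n t)
        = -((x - b) ^ (n + 1)) / (n + 1 : ℝ) * fd n b
          - (-((x - a) ^ (n + 1)) / (n + 1 : ℝ) * fd n a)
          - (-(1 / ((n : ℝ) + 1))) * ∫ t in a..b, (x - t) ^ (n + 1) * fd (n + 1) t := by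
      rw [← hrw]
      linarith [hibp]
    rw [ihn, hmain, Finset.sum_range_succ]
    have hfact : (Nat.factorial (n + 1) : ℝ) = ((n : ℝ) + 1) * (Nat.factorial n : ℝ) := by
      push_cast [Nat.factorial_succ]; ring
    have hsign : (x - b) ^ (n + 1) = (-1 : ℝ) ^ (n + 1) * (b - x) ^ (n + 1) := by
      rw [← neg_pow]; ring_nf
    have hfpos : (0 : ℝ) < Nat.factorial n := by positivity
    have hnpos : (0 : ℝ) < (n : ℝ) + 1 := by positivity
    rw [hsign, hfact]
    field_simp
    ring

theorem endpoint_taylor_inequality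
    (a b K : ℝ) (n : ℕ) (fd : ℕ → ℝ → ℝ) (hab : a < b) (hn : 1 ≤ n)
    (hderiv : ∀ k < n, ∀ x ∈ Icc a b, HasDerivAt (fd k) (fd (k + 1) x) x)
    (hint : IntervalIntegrable (fd n) volume a b)
    (hK : ∀ᵐ t ∂volume, t ∈ Icc a b → |fd n t| ≤ K) :
    ∀ x ∈ Icc a b,
      |(∫ t in a..b, fd 0 t) -
          ∑ k ∈ Finset.range n,
            (1 / (Nat.factorial (k + 1) : ℝ)) *
              ((x - a) ^ (k + 1) * fd k a + (-1 : ℝ) ^ k * (b - x) ^ (k + 1) * fd k b)| ≤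
        (1 / (Nat.factorial (n + 1))) * K * ((x - a) ^ (n + 1) + (b - x) ^ (n + 1)) := by
  intro x hx
  obtain ⟨hax, hxb⟩ := hx
  have hab' : a ≤ b := hab.le
  -- K ≥ 0
  have hK0 : 0 ≤ K := by
    by_contra h
    push_neg at h
    have hnull : ∀ᵐ t ∂(volume : Measure ℝ), t ∉ Icc a b := by
      filter_upwards [hK] with t ht hmem
      linarith [abs_nonneg (fd n t), ht hmem]
    have hz := hnull
    rw [ae_iff] at hz
    simp only [not_not, Set.setOf_mem_eq] at hz
    rw [Real.volume_Icc] at hz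
    simp only [ENNReal.ofReal_eq_zero, sub_nonpos] at hz
    linarith
  have key := key_identity a b x hab' n fd hderiv hint n le_rfl
  rw [key]
  have habs : |(∑ k ∈ Finset.range n,
        (1 / (Nat.factorial (k + 1) : ℝ)) *
          ((x - a) ^ (k + 1) * fd k a + (-1 : ℝ) ^ k * (b - x) ^ (k + 1) * fd k b)) +
      (1 / (Nat.factorial n : ℝ)) * (∫ t in a..b, (x - t) ^ n * fd n t) -
      ∑ k ∈ Finset.range n,
        (1 / (Nat.factorial (k + 1) : ℝ)) *
          ((x - a) ^ (k + 1) * fd k a + (-1 : ℝ) ^ k * (b - x) ^ (k + 1) * fd k b)|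
      = (1 / (Nat.factorial n : ℝ)) * |∫ t in a..b, (x - t) ^ n * fd n t| := by
    rw [add_sub_cancel_left, abs_mul, abs_of_nonneg (by positivity : (0:ℝ) ≤ 1 / (Nat.factorial n : ℝ))]
  rw [habs]
  -- integrability of the product
  have hcontk : Continuous (fun t : ℝ => (x - t) ^ n) := by continuity
  have hI : IntervalIntegrable (fun t => (x - t) ^ n * fd n t) volume a b :=
    hint.continuousOn_mul (hcontk.continuousOn)
  have hI1 : IntervalIntegrable (fun t => (x - t) ^ n * fd n t) volume a x :=
    hI.mono_set (by rw [uIcc_of_le hax, uIcc_of_le hab']; exact Icc_subset_Icc le_rfl hxb)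
  have hI2 : IntervalIntegrable (fun t => (x - t) ^ n * fd n t) volume x b :=
    hI.mono_set (by rw [uIcc_of_le hxb, uIcc_of_le hab']; exact Icc_subset_Icc hax le_rfl)
  have hsplit : (∫ t in a..b, (x - t) ^ n * fd n t)
      = (∫ t in a..x, (x - t) ^ n * fd n t) + (∫ t in x..b, (x - t) ^ n * fd n t) :=
    (intervalIntegral.integral_add_adjacent_intervals hI1 hI2).symm
  -- bound each piece
  have hpow : ((n : ℝ) + 1) ≠ 0 := by positivity
  have e1 : (∫ t in a..x, (x - t) ^ n * K) = K * (x - a) ^ (n + 1) / ((n : ℝ) + 1) := by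
    rw [intervalIntegral.integral_mul_const]
    rw [intervalIntegral.integral_comp_sub_left (fun u => u ^ n) x]
    rw [integral_pow]
    -- push_cast
    field_simp
    ring
  have e2 : (∫ t in x..b, (t - x) ^ n * K) = K * (b - x) ^ (n + 1) / ((n : ℝ) + 1) := by
    rw [intervalIntegral.integral_mul_const]
    rw [intervalIntegral.integral_comp_sub_right (fun u => u ^ n) x]
    rw [integral_pow]
    -- push_cast
    field_simp
    ring
  have b1 : |∫ t in a..x, (x - t) ^ n * fd n t| ≤ K * (x - a) ^ (n + 1) / ((n : ℝ) + 1) := by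
    have hle : ∀ᵐ t ∂(volume.restrict (Set.uIoc a x)), ‖(x - t) ^ n * fd n t‖ ≤ (x - t) ^ n * K := by
      filter_upwards [ae_restrict_of_ae hK, ae_restrict_mem measurableSet_uIoc] with t ht hmem
      rw [Set.uIoc_of_le hax] at hmem
      have htIcc : t ∈ Icc a b := ⟨hmem.1.le, hmem.2.trans hxb⟩
      have hxt : 0 ≤ x - t := by linarith [hmem.2]
      rw [Real.norm_eq_abs, abs_mul, abs_pow, abs_of_nonneg hxt]
      exact mul_le_mul_of_nonneg_left (ht htIcc) (by positivity)
    have := intervalIntegral.norm_integral_le_abs_of_norm_le hle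
      ((hcontk.mul continuous_const).intervalIntegrable a x)
    rw [e1] at this
    calc |∫ t in a..x, (x - t) ^ n * fd n t| ≤ |K * (x - a) ^ (n + 1) / ((n : ℝ) + 1)| := this
      _ = K * (x - a) ^ (n + 1) / ((n : ℝ) + 1) :=
          abs_of_nonneg (div_nonneg (mul_nonneg hK0 (pow_nonneg (by linarith) _)) (by positivity))
  have b2 : |∫ t in x..b, (x - t) ^ n * fd n t| ≤ K * (b - x) ^ (n + 1) / ((n : ℝ) + 1) := by
    have hle : ∀ᵐ t ∂(volume.restrict (Set.uIoc x b)), ‖(x - t) ^ n * fd n t‖ ≤ (t - x) ^ n * K := by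
      filter_upwards [ae_restrict_of_ae hK, ae_restrict_mem measurableSet_uIoc] with t ht hmem
      rw [Set.uIoc_of_le hxb] at hmem
      have htIcc : t ∈ Icc a b := ⟨hax.trans hmem.1.le, hmem.2⟩
      have hxt : 0 ≤ t - x := by linarith [hmem.1]
      rw [Real.norm_eq_abs, abs_mul, abs_pow, abs_sub_comm, abs_of_nonneg hxt]
      exact mul_le_mul_of_nonneg_left (ht htIcc) (by positivity)
    have hc2 : Continuous (fun t : ℝ => (t - x) ^ n * K) := by continuity
    have := intervalIntegral.norm_integral_le_abs_of_norm_le hle (hc2.intervalIntegrable x b)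
    rw [e2] at this
    calc |∫ t in x..b, (x - t) ^ n * fd n t| ≤ |K * (b - x) ^ (n + 1) / ((n : ℝ) + 1)| := this
      _ = K * (b - x) ^ (n + 1) / ((n : ℝ) + 1) :=
          abs_of_nonneg (div_nonneg (mul_nonneg hK0 (pow_nonneg (by linarith) _)) (by positivity))
  have hbound : |∫ t in a..b, (x - t) ^ n * fd n t|
      ≤ K * (x - a) ^ (n + 1) / ((n : ℝ) + 1) + K * (b - x) ^ (n + 1) / ((n : ℝ) + 1) := by
    rw [hsplit]
    exact (abs_add_le _ _).trans (add_le_add b1 b2)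
  have hfact : (Nat.factorial (n + 1) : ℝ) = ((n : ℝ) + 1) * (Nat.factorial n : ℝ) := by
    push_cast [Nat.factorial_succ]; ring
  calc (1 / (Nat.factorial n : ℝ)) * |∫ t in a..b, (x - t) ^ n * fd n t|
      ≤ (1 / (Nat.factorial n : ℝ)) *
        (K * (x - a) ^ (n + 1) / ((n : ℝ) + 1) + K * (b - x) ^ (n + 1) / ((n : ℝ) + 1)) :=
        mul_le_mul_of_nonneg_left hbound (by positivity)
    _ = (1 / (Nat.factorial (n + 1))) * K * ((x - a) ^ (n + 1) + (b - x) ^ (n + 1)) := by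
        rw [hfact]
        have h1 : (Nat.factorial n : ℝ) ≠ 0 := by positivity
        field_simp
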